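/- arXiv:2108.05003 — 3 statements merged into one kernel-verified Lean document; each statement's English description precedes it below -/
import Mathlib

section
/- Let A and B be *-algebras and ⟨L, _A[·,·], [·,·]_B⟩ an A, B imprimitivity bimodule. Suppose S is a non-degenerate *-representation of B on a Hilbert space X such that the map (r,s) ↦ S([s,r]_B) is an operator inner product on L (S is L-positive) and the induced representation T = Ind(S; L) of A on the Hilbert space L ⊗_S X exists. Then T is a *-representation: T(a*) = T(a)* and T(a a') = T(a) T(a') for all a, a' ∈ A. -/
open scoped ComplexOrder TensorProduct

/-!
Both identities are equalities of bounded operators, so by continuity it suffices to check them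
on elementary tensors `r ⊗ ξ`, whose images span a dense subspace. There multiplicativity is
`(a a')·r = a·(a'·r)`, and the adjoint identity comes down to `[a*·r, t]_B = [r, a·t]_B`.
-/

namespace ContinuousLinearMap

theorem ext_tmul_of_denseRange {R M N E F : Type*} [CommSemiring R]
    [AddCommMonoid M] [Module R M] [AddCommMonoid N] [Module R N]
    [AddCommMonoid E] [Module R E] [TopologicalSpace E]
    [AddCommMonoid F] [Module R F] [TopologicalSpace F] [T2Space F]
    {ι : M ⊗[R] N →ₗ[R] E} (hι : DenseRange ι) {f g : E →L[R] F}
    (h : ∀ m n, f (ι (m ⊗ₜ n)) = g (ι (m ⊗ₜ n))) : f = g := by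
  have hcomp : (f : E →ₗ[R] F) ∘ₗ ι = (g : E →ₗ[R] F) ∘ₗ ι := TensorProduct.ext' h
  exact DFunLike.coe_injective <|
    hι.equalizer f.continuous g.continuous (funext fun x => LinearMap.congr_fun hcomp x)

theorem eq_adjoint_of_inner_tmul {𝕜 M N E : Type*} [RCLike 𝕜]
    [AddCommMonoid M] [Module 𝕜 M] [AddCommMonoid N] [Module 𝕜 N]
    [NormedAddCommGroup E] [InnerProductSpace 𝕜 E] [CompleteSpace E]
    {ι : M ⊗[𝕜] N →ₗ[𝕜] E} (hι : DenseRange ι) {f g : E →L[𝕜] E}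
    (h : ∀ m n m' n', inner 𝕜 (g (ι (m ⊗ₜ n))) (ι (m' ⊗ₜ n')) =
      inner 𝕜 (ι (m ⊗ₜ n)) (f (ι (m' ⊗ₜ n')))) :
    g = adjoint f := by
  refine ext_tmul_of_denseRange hι fun m n => ext_inner_right 𝕜 fun w => ?_
  have hdual : innerSL 𝕜 (g (ι (m ⊗ₜ n))) = innerSL 𝕜 (adjoint f (ι (m ⊗ₜ n))) :=
    ext_tmul_of_denseRange hι fun m' n' => by
      rw [innerSL_apply_apply, innerSL_apply_apply, adjoint_inner_left, h]
  simpa only [innerSL_apply_apply] using DFunLike.congr_fun hdual w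

end ContinuousLinearMap

theorem stmt_3_general {A B L : Type*}
    [Ring A] [StarRing A]
    [AddCommGroup L] [Module ℂ L]
    {X : Type*} [NormedAddCommGroup X] [InnerProductSpace ℂ X]
    (lact : A → L → L)
    (bB : L → L → B)
    -- module-type axioms
    (hlact_mul : ∀ (a a' : A) (r : L), lact (a * a') r = lact a (lact a' r))
    -- right B-rigged left A-module axioms
    (hbB_lact : ∀ (a : A) (r s : L), bB (lact a r) s = bB r (lact (star a) s))
    -- S is a non-degenerate *-representation of B on X
    (S : B → X →L[ℂ] X)
    -- the Hilbert space L ⊗_S X and the induced operators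
    {Y : Type*} [NormedAddCommGroup Y] [InnerProductSpace ℂ Y] [CompleteSpace Y]
    (ι : TensorProduct ℂ L X →ₗ[ℂ] Y)
    (hι_dense : DenseRange ι)
    (hι_inner : ∀ (r t : L) (ξ η : X),
      (inner ℂ (ι (t ⊗ₜ[ℂ] η)) (ι (r ⊗ₜ[ℂ] ξ)) : ℂ) = (inner ℂ η (S (bB t r) ξ) : ℂ))
    (T : A → Y →L[ℂ] Y)
    (hT : ∀ (a : A) (r : L) (ξ : X), T a (ι (r ⊗ₜ[ℂ] ξ)) = ι (lact a r ⊗ₜ[ℂ] ξ)) :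
    (∀ a : A, T (star a) = ContinuousLinearMap.adjoint (T a)) ∧
    (∀ a a' : A, T (a * a') = (T a).comp (T a')) := by
  refine ⟨fun a => ?_, fun a a' => ?_⟩
  · refine ContinuousLinearMap.eq_adjoint_of_inner_tmul hι_dense fun r ξ t η => ?_
    rw [hT, hT, hι_inner, hι_inner, hbB_lact, star_star]
  · refine ContinuousLinearMap.ext_tmul_of_denseRange hι_dense fun r ξ => ?_
    rw [ContinuousLinearMap.comp_apply, hT, hT, hT, hlact_mul]

/-- If `L` is an `A, B` imprimitivity bimodule, `S` a non-degenerate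
`*`-representation of `B` on `X` which is `L`-positive, and the induced
representation `T = Ind(S; L)` of `A` on the Hilbert space `L ⊗_S X` exists
(given here by a densely-ranged isometry `ι` of the algebraic tensor product and
operators `T a` acting by `r ⊗ ξ ↦ (a·r) ⊗ ξ`), then `T` is a
`*`-representation: `T(a*) = T(a)*` and `T(a a') = T(a) T(a')`. -/
theorem stmt_3 {A B L : Type*}
    [Ring A] [Algebra ℂ A] [StarRing A] [StarModule ℂ A]
    [Ring B] [Algebra ℂ B] [StarRing B] [StarModule ℂ B]
    [AddCommGroup L] [Module ℂ L]
    {X : Type*} [NormedAddCommGroup X] [InnerProductSpace ℂ X] [CompleteSpace X]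
    (lact : A → L → L) (ract : L → B → L)
    (bA : L → L → A) (bB : L → L → B)
    -- module-type axioms
    (hlact_add : ∀ (a : A) (r s : L), lact a (r + s) = lact a r + lact a s)
    (hlact_mul : ∀ (a a' : A) (r : L), lact (a * a') r = lact a (lact a' r))
    (hract_add : ∀ (r s : L) (b : B), ract (r + s) b = ract r b + ract s b)
    -- right B-rigged left A-module axioms
    (hbB_lin : ∀ (c : ℂ) (r s s' : L), bB r (c • s + s') = c • bB r s + bB r s')
    (hbB_star : ∀ r s : L, star (bB r s) = bB s r)
    (hbB_ract : ∀ (r s : L) (b : B), bB r (ract s b) = bB r s * b)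
    (hbB_lact : ∀ (a : A) (r s : L), bB (lact a r) s = bB r (lact (star a) s))
    -- left A-rigged right B-module axioms
    (hbA_star : ∀ r s : L, star (bA r s) = bA s r)
    (hbA_lact : ∀ (a : A) (r s : L), bA (lact a r) s = a * bA r s)
    -- imprimitivity associativity
    (hassoc : ∀ r s t : L, lact (bA r s) t = ract r (bB s t))
    -- S is a non-degenerate *-representation of B on X
    (S : B → X →L[ℂ] X)
    (hS_add : ∀ b b' : B, S (b + b') = S b + S b')
    (hS_smul : ∀ (c : ℂ) (b : B), S (c • b) = c • S b)
    (hS_mul : ∀ b b' : B, S (b * b') = (S b).comp (S b'))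
    (hS_star : ∀ b : B, S (star b) = ContinuousLinearMap.adjoint (S b))
    (hS_nd : closure (↑(Submodule.span ℂ {y : X | ∃ (b : B) (ξ : X), y = S b ξ}))
      = (Set.univ : Set X))
    -- S is L-positive
    (hpos : ∀ (n : ℕ) (t : Fin n → L) (ξ : Fin n → X),
      (0 : ℂ) ≤ ∑ i, ∑ j, (inner ℂ (ξ i) (S (bB (t j) (t i)) (ξ j)) : ℂ))
    -- the Hilbert space L ⊗_S X and the induced operators
    {Y : Type*} [NormedAddCommGroup Y] [InnerProductSpace ℂ Y] [CompleteSpace Y]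
    (ι : TensorProduct ℂ L X →ₗ[ℂ] Y)
    (hι_dense : DenseRange ι)
    (hι_inner : ∀ (r t : L) (ξ η : X),
      (inner ℂ (ι (t ⊗ₜ[ℂ] η)) (ι (r ⊗ₜ[ℂ] ξ)) : ℂ) = (inner ℂ η (S (bB t r) ξ) : ℂ))
    (T : A → Y →L[ℂ] Y)
    (hT : ∀ (a : A) (r : L) (ξ : X), T a (ι (r ⊗ₜ[ℂ] ξ)) = ι (lact a r ⊗ₜ[ℂ] ξ)) :
    (∀ a : A, T (star a) = ContinuousLinearMap.adjoint (T a)) ∧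
    (∀ a a' : A, T (a * a') = (T a).comp (T a')) :=
  stmt_3_general lact bB hlact_mul hbB_lact S ι hι_dense hι_inner T hT
end

section
/- Let A be a *-algebra, F a two-sided *-ideal of A where A is realized as a convolution algebra of finitely supported functions f : G → ⋃_x B_x with f(x) ∈ B_x, over a discrete group G with a graded family (B_x) in a C*-algebra. For each x ∈ G let J_x be the closure of {f(x) : f ∈ F} in B_x. Then for all y, z ∈ G: B_y·J_z ⊆ J_{yz}, J_z·B_y ⊆ J_{zy}, and (J_y)* ⊆ J_{y⁻¹}. -/
/-!
Convolving an element of `F` on either side with the section `Pi.single y b` (`b ∈ B y`)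
multiplies its values by `b` and shifts the grading by `y`, and `f ↦ (x ↦ star (f x⁻¹))`
preserves `F`; each of the three maps `d ↦ b * d`, `d ↦ d * b`, `star` is continuous, so the
inclusions pass from the value sets to their closures.
-/

open Set

theorem mapsTo_closure_image_eval {α D : Type*} [TopologicalSpace D] {F : Set (α → D)}
    {φ : D → D} (hφ : Continuous φ) {x x' : α} (h : ∀ f ∈ F, ∃ g ∈ F, g x' = φ (f x)) :
    MapsTo φ (closure ((· x) '' F)) (closure ((· x') '' F)) := by
  refine MapsTo.closure ?_ hφ
  rintro _ ⟨f, hf, rfl⟩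
  exact h f hf

section Convolution

variable {G R : Type*} [Group G] [DecidableEq G] [NonUnitalNonAssocSemiring R]

theorem finsum_single_mul_comp_inv_mul (f : G → R) (b : R) (y x : G) :
    ∑ᶠ w, (Pi.single y b : G → R) w * f (w⁻¹ * x) = b * f (y⁻¹ * x) := by
  rw [finsum_eq_single _ y fun w hw => by simp [hw]]
  simp

theorem finsum_mul_single_comp_inv_mul (f : G → R) (b : R) (y x : G) :
    ∑ᶠ w, f w * (Pi.single y b : G → R) (w⁻¹ * x) = f (x * y⁻¹) * b := by
  rw [finsum_eq_single _ (x * y⁻¹) fun w hw => ?_]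
  · simp
  · have : w⁻¹ * x ≠ y := fun h => hw (by rw [← h]; group)
    simp [this]

end Convolution

theorem single_mem_submodule_of_mem {G R M : Type*} [DecidableEq G] [Semiring R]
    [AddCommMonoid M] [Module R M] {B : G → Submodule R M} {y : G} {b : M} (hb : b ∈ B y)
    (x : G) : (Pi.single y b : G → M) x ∈ B x := by
  rcases eq_or_ne x y with rfl | hx
  · simpa using hb
  · simp [hx]

theorem stmt_10_general {G : Type*} [Group G]
    {D : Type*} [NormedRing D] [StarRing D] [CStarRing D]
    [NormedAlgebra ℂ D]
    (B : G → Submodule ℂ D)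
    -- the cross-sectional *-algebra: finitely supported sections
    (secs : Set (G → D))
    (hsecs : secs = {f | (∀ x : G, f x ∈ B x) ∧ (Set.Finite {x : G | f x ≠ 0})})
    (conv : (G → D) → (G → D) → (G → D))
    (hconv : ∀ (f g : G → D) (x : G), conv f g x = ∑ᶠ y : G, f y * g (y⁻¹ * x))
    -- F is a two-sided *-ideal
    (F : Set (G → D))
    (hF_left : ∀ g ∈ secs, ∀ f ∈ F, conv g f ∈ F)
    (hF_right : ∀ g ∈ secs, ∀ f ∈ F, conv f g ∈ F)
    (hF_star : ∀ f ∈ F, (fun x : G => star (f x⁻¹)) ∈ F)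
    (J : G → Set D)
    (hJ : ∀ x : G, J x = closure {d : D | ∃ f ∈ F, f x = d}) :
    ∀ y z : G,
      (∀ b ∈ B y, ∀ j ∈ J z, b * j ∈ J (y * z)) ∧
      (∀ j ∈ J z, ∀ b ∈ B y, j * b ∈ J (z * y)) ∧
      (∀ j ∈ J y, star j ∈ J y⁻¹) := by
  classical
  obtain rfl : J = fun x => closure ((· x) '' F) := funext hJ
  have single_mem : ∀ y, ∀ b ∈ B y, Pi.single y b ∈ secs := fun y b hb => by
    rw [hsecs]
    exact ⟨single_mem_submodule_of_mem hb,
      (finite_singleton y).subset Pi.support_single_subset⟩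
  intro y z
  refine ⟨fun b hb => mapsTo_closure_image_eval (continuous_const_mul b) fun f hf => ?_,
    fun j hj b hb => mapsTo_closure_image_eval (continuous_mul_const b) (fun f hf => ?_) hj,
    mapsTo_closure_image_eval continuous_star fun f hf => ⟨_, hF_star f hf, by simp⟩⟩
  · refine ⟨conv (Pi.single y b) f, hF_left _ (single_mem y b hb) f hf, ?_⟩
    rw [hconv, finsum_single_mul_comp_inv_mul, inv_mul_cancel_left]
  · refine ⟨conv f (Pi.single y b), hF_right _ (single_mem y b hb) f hf, ?_⟩
    rw [hconv, finsum_mul_single_comp_inv_mul, mul_inv_cancel_right]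

/-- Discrete analogue of Lemma 3.8: if `F` is a two-sided `*`-ideal of the
cross-sectional `*`-algebra of a graded family `(B_x)` over a discrete group
`G`, and `J_x` is the closure of `{f(x) : f ∈ F}`, then
`B_y J_z ⊆ J_{yz}`, `J_z B_y ⊆ J_{zy}` and `(J_y)* ⊆ J_{y⁻¹}`. -/
theorem stmt_10 {G : Type*} [Group G]
    {D : Type*} [NormedRing D] [StarRing D] [CStarRing D]
    [NormedAlgebra ℂ D] [StarModule ℂ D]
    (B : G → Submodule ℂ D)
    (hmul : ∀ x y : G, ∀ a ∈ B x, ∀ b ∈ B y, a * b ∈ B (x * y))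
    (hstar : ∀ x : G, ∀ a ∈ B x, star a ∈ B x⁻¹)
    -- the cross-sectional *-algebra: finitely supported sections
    (secs : Set (G → D))
    (hsecs : secs = {f | (∀ x : G, f x ∈ B x) ∧ (Set.Finite {x : G | f x ≠ 0})})
    (conv : (G → D) → (G → D) → (G → D))
    (hconv : ∀ (f g : G → D) (x : G), conv f g x = ∑ᶠ y : G, f y * g (y⁻¹ * x))
    -- F is a two-sided *-ideal
    (F : Set (G → D))
    (hF_secs : F ⊆ secs)
    (hF_add : ∀ f ∈ F, ∀ g ∈ F, f + g ∈ F)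
    (hF_smul : ∀ (c : ℂ), ∀ f ∈ F, c • f ∈ F)
    (hF_left : ∀ g ∈ secs, ∀ f ∈ F, conv g f ∈ F)
    (hF_right : ∀ g ∈ secs, ∀ f ∈ F, conv f g ∈ F)
    (hF_star : ∀ f ∈ F, (fun x : G => star (f x⁻¹)) ∈ F)
    (J : G → Set D)
    (hJ : ∀ x : G, J x = closure {d : D | ∃ f ∈ F, f x = d}) :
    ∀ y z : G,
      (∀ b ∈ B y, ∀ j ∈ J z, b * j ∈ J (y * z)) ∧
      (∀ j ∈ J z, ∀ b ∈ B y, j * b ∈ J (z * y)) ∧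
      (∀ j ∈ J y, star j ∈ J y⁻¹) :=
  stmt_10_general B secs hsecs conv hconv F hF_left hF_right hF_star J hJ
end

section
/- Let G be a discrete group acting on a set M = G/H (cosets of a subgroup H), and let B be a *-algebra graded by G inside a C*-algebra. Define the transformation algebra D with fibers D_x = functions φ : M → B_x (finitely supported), with product (ψφ)(m) = ψ(m)·φ(x⁻¹m) for ψ ∈ D_x, φ ∈ D_y, and involution ψ*(m) = (ψ(x m))* for ψ ∈ D_x. Then D is a graded *-algebra family over G: D_x D_y ⊆ D_{xy} and (D_x)* = D_{x⁻¹}, and the product is associative and the involution is involutive and anti-multiplicative. -/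
open Function

namespace TransformationBundle

variable {G M R : Type*} [Group G] [MulAction G M]

def twistedMul [Mul R] (x : G) (ψ φ : M → R) : M → R :=
  fun m => ψ m * φ (x⁻¹ • m)

def twistedStar [Star R] (x : G) (ψ : M → R) : M → R :=
  fun m => star (ψ (x • m))

def fiber [Zero R] (B : G → Set R) (x : G) : Set (M → R) :=
  {ψ | (∀ m, ψ m ∈ B x) ∧ (support ψ).Finite}

theorem twistedMul_assoc [Semigroup R] (x y : G) (ψ φ χ : M → R) :
    twistedMul (x * y) (twistedMul x ψ φ) χ = twistedMul x ψ (twistedMul y φ χ) := by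
  funext m
  simp only [twistedMul, mul_assoc, mul_inv_rev, smul_smul]

theorem twistedStar_twistedMul [Mul R] [StarMul R] (x y : G) (ψ φ : M → R) :
    twistedStar (x * y) (twistedMul x ψ φ) = twistedMul y⁻¹ (twistedStar y φ) (twistedStar x ψ) := by
  funext m
  simp only [twistedStar, twistedMul, star_mul, inv_inv, smul_smul, inv_mul_cancel_left]

theorem twistedStar_inv_twistedStar [InvolutiveStar R] (x : G) (ψ : M → R) :
    twistedStar x⁻¹ (twistedStar x ψ) = ψ := by
  funext m
  simp only [twistedStar, star_star, smul_inv_smul]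

theorem support_twistedMul_subset [MulZeroClass R] (x : G) (ψ φ : M → R) :
    support (twistedMul x ψ φ) ⊆ support ψ :=
  support_mul_subset_left _ _

theorem support_twistedStar [AddMonoid R] [StarAddMonoid R] (x : G) (ψ : M → R) :
    support (twistedStar x ψ) = (x • ·) ⁻¹' support ψ := by
  ext m
  simp [twistedStar]

theorem twistedMul_mem_fiber [MulZeroClass R] {B : G → Set R}
    (hB : ∀ x y : G, ∀ a ∈ B x, ∀ b ∈ B y, a * b ∈ B (x * y))
    {x y : G} {ψ φ : M → R} (hψ : ψ ∈ fiber B x) (hφ : φ ∈ fiber B y) :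
    twistedMul x ψ φ ∈ fiber B (x * y) :=
  ⟨fun m => hB x y _ (hψ.1 m) _ (hφ.1 _), hψ.2.subset (support_twistedMul_subset x ψ φ)⟩

theorem twistedStar_mem_fiber [AddMonoid R] [StarAddMonoid R] {B : G → Set R}
    (hB : ∀ x : G, ∀ a ∈ B x, star a ∈ B x⁻¹) {x : G} {ψ : M → R} (hψ : ψ ∈ fiber B x) :
    twistedStar x ψ ∈ fiber B x⁻¹ := by
  refine ⟨fun m => hB x _ (hψ.1 _), ?_⟩
  rw [support_twistedStar]
  exact hψ.2.preimage (MulAction.injective x).injOn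

end TransformationBundle

open TransformationBundle in
/-- Discrete analogue of the transformation bundle: with fibers
`D_x = {finitely supported φ : G/H → B_x}`, product
`(ψφ)(m) = ψ(m)·φ(x⁻¹ m)` and involution `ψ*(m) = (ψ(x m))*`, the family
`(D_x)_{x ∈ G}` is a graded `*`-algebra family over `G`: `D_x D_y ⊆ D_{xy}`,
`(D_x)* = D_{x⁻¹}`, the product is associative, and the involution is
involutive and anti-multiplicative. -/
theorem stmt_13 {G : Type*} [Group G] (H : Subgroup G)
    {R : Type*} [Ring R] [Algebra ℂ R] [StarRing R] [StarModule ℂ R]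
    (B : G → Submodule ℂ R)
    (hmul : ∀ x y : G, ∀ a ∈ B x, ∀ b ∈ B y, a * b ∈ B (x * y))
    (hstar : ∀ x : G, ∀ a ∈ B x, star a ∈ B x⁻¹)
    (tmul : G → (G ⧸ H → R) → (G ⧸ H → R) → (G ⧸ H → R))
    (htmul : ∀ (x : G) (ψ φ : G ⧸ H → R) (m : G ⧸ H),
      tmul x ψ φ m = ψ m * φ (x⁻¹ • m))
    (tstar : G → (G ⧸ H → R) → (G ⧸ H → R))
    (htstar : ∀ (x : G) (ψ : G ⧸ H → R) (m : G ⧸ H),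
      tstar x ψ m = star (ψ (x • m)))
    (fib : G → Set (G ⧸ H → R))
    (hfib : ∀ x : G,
      fib x = {ψ | (∀ m : G ⧸ H, ψ m ∈ B x) ∧ Set.Finite {m : G ⧸ H | ψ m ≠ 0}}) :
    (∀ x y : G, ∀ ψ ∈ fib x, ∀ φ ∈ fib y, tmul x ψ φ ∈ fib (x * y)) ∧
    (∀ x : G, ∀ ψ ∈ fib x, tstar x ψ ∈ fib x⁻¹) ∧
    (∀ (x y : G) (ψ φ χ : G ⧸ H → R),
      tmul (x * y) (tmul x ψ φ) χ = tmul x ψ (tmul y φ χ)) ∧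
    (∀ (x y : G) (ψ φ : G ⧸ H → R),
      tstar (x * y) (tmul x ψ φ) = tmul y⁻¹ (tstar y φ) (tstar x ψ)) ∧
    (∀ (x : G) (ψ : G ⧸ H → R), tstar x⁻¹ (tstar x ψ) = ψ) := by
  obtain rfl : tmul = twistedMul := by funext x ψ φ m; exact htmul x ψ φ m
  obtain rfl : tstar = twistedStar := by funext x ψ m; exact htstar x ψ m
  obtain rfl : fib = fiber (fun x => (B x : Set R)) := funext hfib
  exact ⟨fun x y ψ hψ φ hφ => twistedMul_mem_fiber hmul hψ hφ,
    fun x ψ hψ => twistedStar_mem_fiber hstar hψ,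
    twistedMul_assoc, twistedStar_twistedMul, twistedStar_inv_twistedStar⟩
end
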